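/- For every odd natural number g \ge 3 the following four identities hold: 2 D_5(g,1) = 5^{(g-1)/2} (f_{g-2} + f_g) + f_{2g+1}; 2 D_5(g,2) = 5^{(g-1)/2} (f_{g-1} + f_{g+1}) + f_{2g}; 2 D_5(g,3) = 5^{(g-1)/2} (f_{g-1} + f_{g+1}) - f_{2g}; 2 D_5(g,4) = 5^{(g-1)/2} (f_{g-2} + f_g) - f_{2g+1}. -/

import Mathlib

/-- `binZ n j` is the binomial coefficient `n choose j` for `j : ℤ`, which is `0`
unless `0 ≤ j ≤ n`. -/
def binZ (n : ℕ) (j : ℤ) : ℤ := if 0 ≤ j then (n.choose j.toNat : ℤ) else 0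

/-- `catC n j = C(n,j) = binom(n,j) - binom(n,j-1)`. -/
def catC (n : ℕ) (j : ℤ) : ℤ := binZ n j - binZ n (j - 1)

/-- `dP p n k = d_p(n,k) = ∑_{s ∈ ℤ} C(n, (n+1-k)/2 + s p)` when `k ≡ n+1 (mod 2)`,
and `0` otherwise. -/
noncomputable def dP (p n k : ℕ) : ℤ :=
  if k % 2 = (n + 1) % 2 then ∑ᶠ s : ℤ, catC n (((n : ℤ) + 1 - k) / 2 + s * p) else 0

/-- `DP p g k = D_p(g,k) = ∑_{n=0}^{g} 2^{g-n} (g choose n) d_p(n,k)`. -/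
noncomputable def DP (p g k : ℕ) : ℤ :=
  ∑ n ∈ Finset.range (g + 1), 2 ^ (g - n) * (g.choose n : ℤ) * dP p n k

/-!
Pascal's rule `C(n+1, j) = C(n, j) + C(n, j-1)` gives `d_p(n+1, k+1) = d_p(n, k) + d_p(n, k+2)`, and
the reflection `j ↦ n + 1 - j`, which negates `C(n, ·)`, gives `d_p(n, 0) = d_p(n, p) = 0`. Through
the binomial transform this becomes `D_p(g+1, k+1) = D_p(g, k) + 2 D_p(g, k+1) + D_p(g, k+2)` with the
same boundary values, so for `p = 5` the vector `(D(g,1), …, D(g,4))` evolves linearly from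
`(1, 0, 0, 0)`. The differences `(D(g,1) - D(g,4), D(g,2) - D(g,3))` are moved by `[[2,1],[1,1]]`,
the square of the Fibonacci matrix, hence equal `(f_{2g+1}, f_{2g})`; the sums are moved by
`[[2,1],[1,3]]`, whose square is `5 [[1,1],[1,2]]`, again five times a squared Fibonacci matrix,
which produces the factor `5^{(g-1)/2}` for odd `g`.
-/

open Function Finset

lemma binZ_eq_zero_of_neg {n : ℕ} {j : ℤ} (h : j < 0) : binZ n j = 0 := by
  simp [binZ, not_le.2 h]

lemma binZ_eq_zero_of_gt {n : ℕ} {j : ℤ} (h : (n : ℤ) < j) : binZ n j = 0 := by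
  have : n < j.toNat := by omega
  simp [binZ, Nat.choose_eq_zero_of_lt this]

lemma binZ_succ (n : ℕ) (j : ℤ) : binZ (n + 1) j = binZ n j + binZ n (j - 1) := by
  rcases lt_trichotomy j 0 with h | rfl | h
  · simp [binZ_eq_zero_of_neg, h, show j - 1 < 0 by omega]
  · simp [binZ]
  · obtain ⟨m, rfl⟩ : ∃ m : ℕ, j = m + 1 := ⟨(j - 1).toNat, by omega⟩
    simp only [binZ, show (0 : ℤ) ≤ m + 1 by omega, show (0 : ℤ) ≤ m + 1 - 1 by omega, if_true,
      show ((m : ℤ) + 1).toNat = m + 1 by omega, show ((m : ℤ) + 1 - 1).toNat = m by omega,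
      Nat.choose_succ_succ, Nat.cast_add]
    ring

lemma binZ_sub (n : ℕ) (j : ℤ) : binZ n (n - j) = binZ n j := by
  rcases lt_or_ge j 0 with h | h
  · rw [binZ_eq_zero_of_neg h, binZ_eq_zero_of_gt (by omega)]
  rcases le_or_gt j n with h' | h'
  · obtain ⟨m, rfl⟩ : ∃ m : ℕ, j = m := ⟨j.toNat, by omega⟩
    have hm : m ≤ n := by omega
    simp only [binZ, h, show (0 : ℤ) ≤ n - m by omega, if_true,
      show ((n : ℤ) - m).toNat = n - m by omega, Int.toNat_natCast, Nat.choose_symm hm]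
  · rw [binZ_eq_zero_of_neg (by omega), binZ_eq_zero_of_gt h']

lemma catC_succ (n : ℕ) (j : ℤ) : catC (n + 1) j = catC n j + catC n (j - 1) := by
  simp only [catC, binZ_succ]; ring

lemma catC_sub (n : ℕ) (j : ℤ) : catC n (n + 1 - j) = -catC n j := by
  rw [catC, catC, show (n : ℤ) + 1 - j = n - (j - 1) by ring, binZ_sub,
    show (n : ℤ) - (j - 1) - 1 = n - j by ring, binZ_sub]
  ring

lemma support_catC_subset (n : ℕ) : support (catC n) ⊆ Set.Icc 0 (n + 1) := by
  intro j hj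
  by_contra hout
  simp only [Set.mem_Icc, not_and_or, not_le] at hout
  apply hj
  rcases hout with h | h
  · rw [catC, binZ_eq_zero_of_neg h, binZ_eq_zero_of_neg (by omega), sub_zero]
  · rw [catC, binZ_eq_zero_of_gt (by omega), binZ_eq_zero_of_gt (by omega), sub_zero]

lemma catC_eq_zero_of_notMem {n : ℕ} {j : ℤ} (hj : j ∉ Set.Icc 0 ((n : ℤ) + 1)) : catC n j = 0 :=
  notMem_support.1 fun h => hj (support_catC_subset n h)

lemma hasFiniteSupport_catC_comp (n : ℕ) (j : ℤ) {p : ℤ} (hp : p ≠ 0) :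
    (fun s : ℤ => catC n (j + s * p)).HasFiniteSupport := by
  have hinj : Injective fun s : ℤ => j + s * p := fun s t hst => by
    simpa [hp] using hst
  exact ((Set.finite_Icc _ _).preimage hinj.injOn).subset
    fun s hs => support_catC_subset n hs

/-- The reflection `j ↦ n + 1 - j` negates `catC n` and maps `j + s p` to `j + (t - s) p`. -/
lemma finsum_catC_eq_zero (n : ℕ) {j p t : ℤ} (h : 2 * j + t * p = n + 1) :
    ∑ᶠ s : ℤ, catC n (j + s * p) = 0 := by
  have hrefl : ∑ᶠ s : ℤ, catC n (j + s * p) = -∑ᶠ s : ℤ, catC n (j + s * p) := by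
    rw [← finsum_neg_distrib,
      ← finsum_comp_equiv (Equiv.subLeft t) (f := fun s => catC n (j + s * p))]
    refine finsum_congr fun s => ?_
    rw [← catC_sub, Equiv.subLeft_apply]
    congr 1
    linear_combination h
  linarith

lemma dP_succ_succ {p : ℕ} (hp : 0 < p) (n k : ℕ) :
    dP p (n + 1) (k + 1) = dP p n k + dP p n (k + 2) := by
  by_cases hpar : k % 2 = (n + 1) % 2
  · set j : ℤ := ((n : ℤ) + 1 - k) / 2
    have hj₁ : (((n + 1 : ℕ) : ℤ) + 1 - (k + 1 : ℕ)) / 2 = j := by push_cast; congr 1; ring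
    have hj₂ : ((n : ℤ) + 1 - (k + 2 : ℕ)) / 2 = j - 1 := by push_cast; omega
    rw [dP, dP, dP, if_pos (by omega), if_pos hpar, if_pos (by omega), hj₁, hj₂,
      ← finsum_add_distrib (hasFiniteSupport_catC_comp n j (by omega))
        (hasFiniteSupport_catC_comp n (j - 1) (by omega))]
    refine finsum_congr fun s => ?_
    rw [catC_succ, sub_add_eq_add_sub]
  · rw [dP, dP, dP, if_neg (by omega), if_neg hpar, if_neg (by omega), add_zero]

lemma dP_zero_right (p n : ℕ) : dP p n 0 = 0 := by
  unfold dP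
  split_ifs with hpar
  · exact finsum_catC_eq_zero n (t := 0) (by push_cast; omega)
  · rfl

lemma dP_self (p n : ℕ) : dP p n p = 0 := by
  unfold dP
  split_ifs with hpar
  · exact finsum_catC_eq_zero n (t := 1) (by omega)
  · rfl

/-- `(c + E)^(g+1) = c (c + E)^g + E (c + E)^g`, read off at `0`, for the shift `E x = x ∘ succ`. -/
lemma sum_pow_mul_choose_succ {R : Type*} [CommSemiring R] (c : R) (x : ℕ → R) (g : ℕ) :
    ∑ n ∈ range (g + 1 + 1), c ^ (g + 1 - n) * ((g + 1).choose n : R) * x n =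
      c * ∑ n ∈ range (g + 1), c ^ (g - n) * (g.choose n : R) * x n +
        ∑ n ∈ range (g + 1), c ^ (g - n) * (g.choose n : R) * x (n + 1) := by
  have hshift : c * ∑ n ∈ range (g + 1), c ^ (g - n) * (g.choose n : R) * x n =
      ∑ n ∈ range (g + 1), c ^ (g - n) * (g.choose (n + 1) : R) * x (n + 1) + c ^ (g + 1) * x 0 := by
    rw [sum_range_succ', sum_range_succ, Nat.choose_succ_self, mul_add, mul_sum]
    simp only [Nat.cast_zero, mul_zero, zero_mul, add_zero, Nat.choose_zero_right, Nat.cast_one,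
      Nat.sub_zero]
    congr 1
    · refine sum_congr rfl fun n hn => ?_
      rw [show g - n = g - (n + 1) + 1 by have := mem_range.1 hn; omega, pow_succ]
      ring
    · ring
  rw [hshift, sum_range_succ', add_right_comm, ← sum_add_distrib]
  simp only [Nat.choose_succ_succ', Nat.cast_add, Nat.succ_sub_succ, Nat.sub_zero,
    Nat.choose_zero_right, Nat.cast_one, mul_one]
  congr 1
  exact sum_congr rfl fun n _ => by ring

lemma DP_succ_succ {p : ℕ} (hp : 0 < p) (g k : ℕ) :
    DP p (g + 1) (k + 1) = DP p g k + 2 * DP p g (k + 1) + DP p g (k + 2) := by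
  rw [DP, sum_pow_mul_choose_succ 2 (fun n => dP p n (k + 1)) g]
  simp only [dP_succ_succ hp, mul_add, sum_add_distrib, DP]
  ring

lemma DP_zero_right (p g : ℕ) : DP p g 0 = 0 :=
  sum_eq_zero fun n _ => by rw [dP_zero_right, mul_zero]

lemma DP_self (p g : ℕ) : DP p g p = 0 :=
  sum_eq_zero fun n _ => by rw [dP_self, mul_zero]

lemma DP_five_zero_left : DP 5 0 1 = 1 ∧ DP 5 0 2 = 0 ∧ DP 5 0 3 = 0 ∧ DP 5 0 4 = 0 := by
  norm_num [DP, dP]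
  refine ⟨?_, ?_⟩
  · rw [finsum_eq_single _ 0 fun s hs => catC_eq_zero_of_notMem (by simp; omega)]
    decide
  · exact finsum_eq_zero_of_forall_eq_zero fun s => catC_eq_zero_of_notMem (by simp; omega)

lemma DP_five_succ (g : ℕ) :
    DP 5 (g + 1) 1 = 2 * DP 5 g 1 + DP 5 g 2 ∧
    DP 5 (g + 1) 2 = DP 5 g 1 + 2 * DP 5 g 2 + DP 5 g 3 ∧
    DP 5 (g + 1) 3 = DP 5 g 2 + 2 * DP 5 g 3 + DP 5 g 4 ∧
    DP 5 (g + 1) 4 = DP 5 g 3 + 2 * DP 5 g 4 := by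
  have h := DP_succ_succ (p := 5) (by norm_num) g
  refine ⟨?_, h 1, h 2, ?_⟩
  · rw [h 0, DP_zero_right, zero_add]
  · rw [h 3, show 3 + 2 = 5 from rfl, DP_self, add_zero]

lemma DP_five_sub (g : ℕ) :
    DP 5 g 1 - DP 5 g 4 = Nat.fib (2 * g + 1) ∧ DP 5 g 2 - DP 5 g 3 = Nat.fib (2 * g) := by
  induction g with
  | zero =>
    obtain ⟨h1, h2, h3, h4⟩ := DP_five_zero_left
    simp [h1, h2, h3, h4]
  | succ g ih =>
    obtain ⟨h1, h2, h3, h4⟩ := DP_five_succ g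
    have hodd : (Nat.fib (2 * (g + 1) + 1) : ℤ) = 2 * Nat.fib (2 * g + 1) + Nat.fib (2 * g) := by
      rw [show 2 * (g + 1) + 1 = 2 * g + 3 from rfl]
      push_cast [Nat.fib_add_two]
      ring
    have heven : (Nat.fib (2 * (g + 1)) : ℤ) = Nat.fib (2 * g + 1) + Nat.fib (2 * g) := by
      rw [show 2 * (g + 1) = 2 * g + 2 from rfl, Nat.fib_add_two, Nat.cast_add, add_comm]
    constructor
    · linear_combination h1 - h4 + 2 * ih.1 + ih.2 - hodd
    · linear_combination h2 - h3 + ih.1 + ih.2 - heven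

lemma DP_five_add_succ (g : ℕ) :
    DP 5 (g + 1) 1 + DP 5 (g + 1) 4 = 2 * (DP 5 g 1 + DP 5 g 4) + (DP 5 g 2 + DP 5 g 3) ∧
    DP 5 (g + 1) 2 + DP 5 (g + 1) 3 = (DP 5 g 1 + DP 5 g 4) + 3 * (DP 5 g 2 + DP 5 g 3) := by
  obtain ⟨h1, h2, h3, h4⟩ := DP_five_succ g
  exact ⟨by linear_combination h1 + h4, by linear_combination h2 + h3⟩

lemma DP_five_add_add_two (g : ℕ) :
    DP 5 (g + 2) 1 + DP 5 (g + 2) 4 = 5 * ((DP 5 g 1 + DP 5 g 4) + (DP 5 g 2 + DP 5 g 3)) ∧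
    DP 5 (g + 2) 2 + DP 5 (g + 2) 3 = 5 * ((DP 5 g 1 + DP 5 g 4) + 2 * (DP 5 g 2 + DP 5 g 3)) := by
  obtain ⟨h1, h2⟩ := DP_five_add_succ g
  obtain ⟨h1', h2'⟩ := DP_five_add_succ (g + 1)
  exact ⟨by linear_combination h1' + 2 * h1 + h2, by linear_combination h2' + h1 + 3 * h2⟩

lemma DP_five_add_odd (u : ℕ) :
    DP 5 (2 * u + 3) 1 + DP 5 (2 * u + 3) 4 =
        5 ^ (u + 1) * (Nat.fib (2 * u + 1) + Nat.fib (2 * u + 3) : ℤ) ∧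
    DP 5 (2 * u + 3) 2 + DP 5 (2 * u + 3) 3 =
        5 ^ (u + 1) * (Nat.fib (2 * u + 2) + Nat.fib (2 * u + 4) : ℤ) := by
  induction u with
  | zero =>
    obtain ⟨h1, h2, h3, h4⟩ := DP_five_zero_left
    obtain ⟨k1, k2⟩ := DP_five_add_succ 0
    obtain ⟨s1, s2⟩ := DP_five_add_add_two 1
    norm_num [Nat.fib_add_two]
    constructor <;> linarith
  | succ u ih =>
    have hs := DP_five_add_add_two (2 * u + 3)
    have hf (m : ℕ) : (Nat.fib (m + 2) : ℤ) = Nat.fib m + Nat.fib (m + 1) := by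
      rw [Nat.fib_add_two, Nat.cast_add]
    have f3 : (Nat.fib (2 * u + 3) : ℤ) = Nat.fib (2 * u + 1) + Nat.fib (2 * u + 2) := hf _
    have f4 : (Nat.fib (2 * u + 4) : ℤ) = Nat.fib (2 * u + 2) + Nat.fib (2 * u + 3) := hf _
    have f5 : (Nat.fib (2 * u + 5) : ℤ) = Nat.fib (2 * u + 3) + Nat.fib (2 * u + 4) := hf _
    have f6 : (Nat.fib (2 * u + 6) : ℤ) = Nat.fib (2 * u + 4) + Nat.fib (2 * u + 5) := hf _
    rw [show 2 * (u + 1) + 3 = 2 * u + 5 by ring, show 2 * (u + 1) + 1 = 2 * u + 3 by ring,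
      show 2 * (u + 1) + 2 = 2 * u + 4 by ring, show 2 * (u + 1) + 4 = 2 * u + 6 by ring]
    refine ⟨?_, ?_⟩
    · linear_combination hs.1 + 5 * ih.1 + 5 * ih.2 - 5 ^ (u + 2) * (f5 + f3)
    · linear_combination hs.2 + 5 * ih.1 + 10 * ih.2 - 5 ^ (u + 2) * (f6 + f5 + f4 + f3)

/-- For every odd `g ≥ 3`:
`2 D_5(g,1) = 5^{(g-1)/2} (f_{g-2} + f_g) + f_{2g+1}`,
`2 D_5(g,2) = 5^{(g-1)/2} (f_{g-1} + f_{g+1}) + f_{2g}`,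
`2 D_5(g,3) = 5^{(g-1)/2} (f_{g-1} + f_{g+1}) - f_{2g}`,
`2 D_5(g,4) = 5^{(g-1)/2} (f_{g-2} + f_g) - f_{2g+1}`. -/
theorem DP_five_odd (g : ℕ) (hg : 3 ≤ g) (hgo : Odd g) :
    2 * DP 5 g 1 =
      5 ^ ((g - 1) / 2) * ((Nat.fib (g - 2) : ℤ) + (Nat.fib g : ℤ)) + (Nat.fib (2 * g + 1) : ℤ) ∧
    2 * DP 5 g 2 =
      5 ^ ((g - 1) / 2) * ((Nat.fib (g - 1) : ℤ) + (Nat.fib (g + 1) : ℤ)) + (Nat.fib (2 * g) : ℤ) ∧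
    2 * DP 5 g 3 =
      5 ^ ((g - 1) / 2) * ((Nat.fib (g - 1) : ℤ) + (Nat.fib (g + 1) : ℤ)) - (Nat.fib (2 * g) : ℤ) ∧
    2 * DP 5 g 4 =
      5 ^ ((g - 1) / 2) * ((Nat.fib (g - 2) : ℤ) + (Nat.fib g : ℤ)) - (Nat.fib (2 * g + 1) : ℤ) := by
  obtain ⟨u, rfl⟩ : ∃ u, g = 2 * u + 3 := by
    obtain ⟨t, rfl⟩ := hgo
    exact ⟨t - 1, by omega⟩
  obtain ⟨hsub₁, hsub₂⟩ := DP_five_sub (2 * u + 3)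
  obtain ⟨hadd₁, hadd₂⟩ := DP_five_add_odd u
  rw [show (2 * u + 3 - 1) / 2 = u + 1 by omega, show 2 * u + 3 - 2 = 2 * u + 1 by omega,
    show 2 * u + 3 - 1 = 2 * u + 2 by omega, show 2 * u + 3 + 1 = 2 * u + 4 by omega]
  exact ⟨by linear_combination hadd₁ + hsub₁, by linear_combination hadd₂ + hsub₂,
    by linear_combination hadd₂ - hsub₂, by linear_combination hadd₁ - hsub₁⟩
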